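/- arXiv:1406.5557 — 2 statements merged into one kernel-verified Lean document; each statement's English description precedes it below -/
import Mathlib

section
/- For every n ≥ 0, the BBS translation generator matrices satisfy a^{(n)} (a^{(n)})ᵀ + b^{(n)} (b^{(n)})ᵀ = 2·Id, where Id is the 2^n × 2^n identity matrix. -/
open Matrix

/-- Equivalence identifying `Fin (2^n) ⊕ Fin (2^n)` with `Fin (2^(n+1))`. -/
def blockEquiv (n : ℕ) : Fin (2 ^ n) ⊕ Fin (2 ^ n) ≃ Fin (2 ^ (n + 1)) :=
  finSumFinEquiv.trans (finCongr (by rw [pow_succ, mul_two]))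

/-- Assemble a `2^(n+1) × 2^(n+1)` matrix from four `2^n × 2^n` blocks. -/
noncomputable def mkBlock {n : ℕ} (A B C D : Matrix (Fin (2 ^ n)) (Fin (2 ^ n)) ℝ) :
    Matrix (Fin (2 ^ (n + 1))) (Fin (2 ^ (n + 1))) ℝ :=
  Matrix.reindex (blockEquiv n) (blockEquiv n) (Matrix.fromBlocks A B C D)

/-- The pair of BBS translation generators. -/
noncomputable def abB : (n : ℕ) →
    Matrix (Fin (2 ^ n)) (Fin (2 ^ n)) ℝ × Matrix (Fin (2 ^ n)) (Fin (2 ^ n)) ℝ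
  | 0 => (1, 1)
  | n + 1 => (mkBlock (abB n).1 (abB n).2 0 0, mkBlock 0 0 (abB n).1 (abB n).2)

noncomputable def aB (n : ℕ) : Matrix (Fin (2 ^ n)) (Fin (2 ^ n)) ℝ := (abB n).1
noncomputable def bB (n : ℕ) : Matrix (Fin (2 ^ n)) (Fin (2 ^ n)) ℝ := (abB n).2

/-- The pair of lamplighter generators. -/
noncomputable def abL : (n : ℕ) →
    Matrix (Fin (2 ^ n)) (Fin (2 ^ n)) ℝ × Matrix (Fin (2 ^ n)) (Fin (2 ^ n)) ℝ
  | 0 => (1, 1)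
  | n + 1 => (mkBlock 0 (abL n).2 (abL n).1 0, mkBlock (abL n).1 0 0 (abL n).2)

noncomputable def aL (n : ℕ) : Matrix (Fin (2 ^ n)) (Fin (2 ^ n)) ℝ := (abL n).1
noncomputable def bL (n : ℕ) : Matrix (Fin (2 ^ n)) (Fin (2 ^ n)) ℝ := (abL n).2

/-- The BBS translation transition operator. -/
noncomputable def MB (n : ℕ) : Matrix (Fin (2 ^ n)) (Fin (2 ^ n)) ℝ :=
  (1 / 4 : ℝ) • (aB n + (aB n)ᵀ + bB n + (bB n)ᵀ)

/-- The lamplighter transition operator. -/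
noncomputable def ML (n : ℕ) : Matrix (Fin (2 ^ n)) (Fin (2 ^ n)) ℝ :=
  (1 / 4 : ℝ) • (aL n + (aL n)ᵀ + bL n + (bL n)ᵀ)

lemma mkBlock_mul {n : ℕ} (A B C D A' B' C' D' : Matrix (Fin (2^n)) (Fin (2^n)) ℝ) :
    mkBlock A B C D * mkBlock A' B' C' D' =
    mkBlock (A*A'+B*C') (A*B'+B*D') (C*A'+D*C') (C*B'+D*D') := by
  simp [mkBlock, reindex_apply, submatrix_mul_equiv, fromBlocks_multiply]

lemma mkBlock_transpose {n : ℕ} (A B C D : Matrix (Fin (2^n)) (Fin (2^n)) ℝ) :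
    (mkBlock A B C D)ᵀ = mkBlock Aᵀ Cᵀ Bᵀ Dᵀ := by
  simp [mkBlock, transpose_reindex, fromBlocks_transpose]

lemma mkBlock_add {n : ℕ} (A B C D A' B' C' D' : Matrix (Fin (2^n)) (Fin (2^n)) ℝ) :
    mkBlock A B C D + mkBlock A' B' C' D' = mkBlock (A+A') (B+B') (C+C') (D+D') := by
  ext i j
  simp only [mkBlock, reindex_apply, submatrix_apply, Matrix.add_apply]
  rcases (blockEquiv n).symm i with x | x <;> rcases (blockEquiv n).symm j with y | y <;>
    simp [fromBlocks]

lemma mkBlock_smul {n : ℕ} (r : ℝ) (A B C D : Matrix (Fin (2^n)) (Fin (2^n)) ℝ) :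
    r • mkBlock A B C D = mkBlock (r•A) (r•B) (r•C) (r•D) := by
  ext i j
  simp only [mkBlock, reindex_apply, submatrix_apply, Matrix.smul_apply]
  rcases (blockEquiv n).symm i with x | x <;> rcases (blockEquiv n).symm j with y | y <;>
    simp [fromBlocks]

lemma mkBlock_one {n : ℕ} : mkBlock (1 : Matrix (Fin (2^n)) _ ℝ) 0 0 1 = 1 := by
  simp [mkBlock, fromBlocks_one]

/-- For every `n ≥ 0`, the BBS translation generators satisfy
`a⁽ⁿ⁾ (a⁽ⁿ⁾)ᵀ + b⁽ⁿ⁾ (b⁽ⁿ⁾)ᵀ = 2 · Id`. -/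
theorem bbs_generators_sum_eq_two_id (n : ℕ) :
    aB n * (aB n)ᵀ + bB n * (bB n)ᵀ = (2 : ℝ) • (1 : Matrix (Fin (2 ^ n)) (Fin (2 ^ n)) ℝ) := by
  induction n with
  | zero =>
    simp [aB, bB, abB]
    norm_num [two_smul]
  | succ n ih =>
    have ha : aB (n+1) = mkBlock (aB n) (bB n) 0 0 := rfl
    have hb : bB (n+1) = mkBlock 0 0 (aB n) (bB n) := rfl
    rw [ha, hb, mkBlock_transpose, mkBlock_transpose, mkBlock_mul, mkBlock_mul,
      mkBlock_add]
    simp only [Matrix.transpose_zero, Matrix.mul_zero, Matrix.zero_mul, add_zero, zero_add, ih]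
    rw [← mkBlock_one, mkBlock_smul]
    simp
end

section
/- For every n ≥ 1, the set of real eigenvalues of the lamplighter transition operator M_L^{(n)} coincides with the set of real eigenvalues of the BBS translation transition operator M_B^{(n)}. -/
open Matrix

def side {α : Type*} (b : Bool) (x : α) : α ⊕ α := if b then .inr x else .inl x

lemma side_eq_iff {α : Type*} (b c : Bool) (x y : α) :
    side b x = side c y ↔ b = c ∧ x = y := by
  cases b <;> cases c <;> simp [side]

def fB : (n : ℕ) → Bool → Fin (2 ^ n) → Fin (2 ^ n)
  | 0, _, y => y
  | n + 1, h, y =>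
      blockEquiv n (side h (Sum.elim (fB n false) (fB n true) ((blockEquiv n).symm y)))

def fL : (n : ℕ) → Bool → Fin (2 ^ n) → Fin (2 ^ n)
  | 0, _, y => y
  | n + 1, h, y =>
      blockEquiv n (Sum.elim (fun x => side (!h) (fL n false x))
        (fun x => side h (fL n true x)) ((blockEquiv n).symm y))

lemma fB_succ (n : ℕ) (h k : Bool) (y : Fin (2 ^ n)) :
    fB (n + 1) h (blockEquiv n (side k y)) = blockEquiv n (side h (fB n k y)) := by
  cases k <;> simp [fB, side]

lemma fL_succ (n : ℕ) (h k : Bool) (y : Fin (2 ^ n)) :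
    fL (n + 1) h (blockEquiv n (side k y)) = blockEquiv n (side (k.xor !h) (fL n k y)) := by
  cases k <;> cases h <;> simp [fL, side]

lemma mkBlock_apply {n : ℕ} (A B C D : Matrix (Fin (2 ^ n)) (Fin (2 ^ n)) ℝ)
    (s t : Fin (2 ^ n) ⊕ Fin (2 ^ n)) :
    mkBlock A B C D (blockEquiv n s) (blockEquiv n t) = fromBlocks A B C D s t := by
  simp [mkBlock]

lemma entryB (n : ℕ) (h : Bool) (x y : Fin (2 ^ n)) :
    (cond h (bB n) (aB n)) x y = if x = fB n h y then (1 : ℝ) else 0 := by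
  induction n generalizing h with
  | zero =>
      have hx : x = y := Fin.ext (by have hx := x.isLt; have hy := y.isLt; norm_num at hx hy; omega)
      cases h <;> simp [aB, bB, abB, fB, hx, Matrix.one_apply]
  | succ n ih =>
      have ihA : ∀ x y : Fin (2 ^ n), aB n x y = if x = fB n false y then (1:ℝ) else 0 :=
        fun x y => ih false x y
      have ihB : ∀ x y : Fin (2 ^ n), bB n x y = if x = fB n true y then (1:ℝ) else 0 :=
        fun x y => ih true x y
      obtain ⟨s, rfl⟩ : ∃ s, x = blockEquiv n s := ⟨_, ((blockEquiv n).apply_symm_apply x).symm⟩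
      obtain ⟨t, rfl⟩ : ∃ t, y = blockEquiv n t := ⟨_, ((blockEquiv n).apply_symm_apply y).symm⟩
      have haB : aB (n + 1) = mkBlock (aB n) (bB n) 0 0 := rfl
      have hbB : bB (n + 1) = mkBlock 0 0 (aB n) (bB n) := rfl
      have hfl : ∀ (h : Bool) (y : Fin (2 ^ n)),
          fB (n + 1) h (blockEquiv n (Sum.inl y)) = blockEquiv n (side h (fB n false y)) :=
        fun h y => fB_succ n h false y
      have hfr : ∀ (h : Bool) (y : Fin (2 ^ n)),
          fB (n + 1) h (blockEquiv n (Sum.inr y)) = blockEquiv n (side h (fB n true y)) :=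
        fun h y => fB_succ n h true y
      rcases s with x | x <;> rcases t with y | y <;> cases h <;>
        simp [haB, hbB, mkBlock_apply, hfl, hfr, side, Equiv.apply_eq_iff_eq, ihA, ihB]

lemma entryL (n : ℕ) (h : Bool) (x y : Fin (2 ^ n)) :
    (cond h (bL n) (aL n)) x y = if x = fL n h y then (1 : ℝ) else 0 := by
  induction n generalizing h with
  | zero =>
      have hx : x = y := Fin.ext (by have hx := x.isLt; have hy := y.isLt; norm_num at hx hy; omega)
      cases h <;> simp [aL, bL, abL, fL, hx, Matrix.one_apply]
  | succ n ih =>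
      have ihA : ∀ x y : Fin (2 ^ n), aL n x y = if x = fL n false y then (1:ℝ) else 0 :=
        fun x y => ih false x y
      have ihB : ∀ x y : Fin (2 ^ n), bL n x y = if x = fL n true y then (1:ℝ) else 0 :=
        fun x y => ih true x y
      obtain ⟨s, rfl⟩ : ∃ s, x = blockEquiv n s := ⟨_, ((blockEquiv n).apply_symm_apply x).symm⟩
      obtain ⟨t, rfl⟩ : ∃ t, y = blockEquiv n t := ⟨_, ((blockEquiv n).apply_symm_apply y).symm⟩
      have haL : aL (n + 1) = mkBlock 0 (bL n) (aL n) 0 := rfl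
      have hbL : bL (n + 1) = mkBlock (aL n) 0 0 (bL n) := rfl
      have hfl : ∀ (h : Bool) (y : Fin (2 ^ n)),
          fL (n + 1) h (blockEquiv n (Sum.inl y)) = blockEquiv n (side (false.xor !h) (fL n false y)) :=
        fun h y => fL_succ n h false y
      have hfr : ∀ (h : Bool) (y : Fin (2 ^ n)),
          fL (n + 1) h (blockEquiv n (Sum.inr y)) = blockEquiv n (side (true.xor !h) (fL n true y)) :=
        fun h y => fL_succ n h true y
      rcases s with x | x <;> rcases t with y | y <;> cases h <;>
        simp [haL, hbL, mkBlock_apply, hfl, hfr, side, Equiv.apply_eq_iff_eq, ihA, ihB]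

lemma bitlem (h a b : Bool) : h.xor b = a.xor (!(h.xor (!(a.xor b)))) := by
  cases h <;> cases a <;> cases b <;> rfl

lemma key (n : ℕ) : ∃ (q : Equiv.Perm (Fin (2 ^ n))) (g : Fin (2 ^ n) → Bool),
    ∀ (h : Bool) (y : Fin (2 ^ n)), q (fB n h y) = fL n (h.xor (g y)) (q y) := by
  induction n with
  | zero => exact ⟨Equiv.refl _, fun _ => false, fun h y => by cases h <;> rfl⟩
  | succ n ih =>
      obtain ⟨q, g, hqg⟩ := ih
      set t : Fin (2 ^ n) ⊕ Fin (2 ^ n) ≃ Fin (2 ^ n) ⊕ Fin (2 ^ n) :=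
        { toFun := Sum.elim (fun x => side (g x) (q x)) (fun x => side (!(g x)) (q x))
          invFun := Sum.elim (fun z => side (g (q.symm z)) (q.symm z))
                             (fun z => side (!(g (q.symm z))) (q.symm z))
          left_inv := by rintro (x | x) <;> rcases hg : g x <;> simp [side, hg]
          right_inv := by rintro (z | z) <;> rcases hg : g (q.symm z) <;> simp [side, hg] }
        with ht_def
      have ht : ∀ (b : Bool) (x : Fin (2 ^ n)), t (side b x) = side (b.xor (g x)) (q x) := by
        intro b x; cases b <;> simp [ht_def, side]
      refine ⟨((blockEquiv n).symm.trans t).trans (blockEquiv n),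
        fun j => Sum.elim (fun y => !((g y).xor (g (fB n false y))))
          (fun y => !((!(g y)).xor (g (fB n true y)))) ((blockEquiv n).symm j), ?_⟩
      intro h j
      obtain ⟨s, rfl⟩ : ∃ s, j = blockEquiv n s := ⟨_, ((blockEquiv n).apply_symm_apply j).symm⟩
      have hq' : ∀ s, (((blockEquiv n).symm.trans t).trans (blockEquiv n)) (blockEquiv n s)
          = blockEquiv n (t s) := by intro s; simp
      rcases s with y | y
      · have h1 : (Sum.inl y : Fin (2 ^ n) ⊕ Fin (2 ^ n)) = side false y := rfl
        rw [h1, fB_succ, hq', hq', ht, ht, fL_succ]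
        simp only [Equiv.symm_apply_apply]
        rw [show (side false y : Fin (2 ^ n) ⊕ Fin (2 ^ n)) = Sum.inl y from rfl]
        simp only [Sum.elim_inl, Bool.false_xor]
        rw [Equiv.apply_eq_iff_eq, side_eq_iff]
        refine ⟨bitlem h (g y) (g (fB n false y)), ?_⟩
        simpa using hqg false y
      · have h1 : (Sum.inr y : Fin (2 ^ n) ⊕ Fin (2 ^ n)) = side true y := rfl
        rw [h1, fB_succ, hq', hq', ht, ht, fL_succ]
        simp only [Equiv.symm_apply_apply]
        rw [show (side true y : Fin (2 ^ n) ⊕ Fin (2 ^ n)) = Sum.inr y from rfl]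
        simp only [Sum.elim_inr, Bool.true_xor]
        rw [Equiv.apply_eq_iff_eq, side_eq_iff]
        refine ⟨?_, ?_⟩
        · have := bitlem h (!(g y)) (g (fB n true y)); simpa using this
        · simpa using hqg true y

lemma conj (n : ℕ) : ∃ q : Equiv.Perm (Fin (2 ^ n)), ∀ x y, MB n x y = ML n (q x) (q y) := by
  obtain ⟨q, g, hk⟩ := key n
  refine ⟨q, fun x y => ?_⟩
  have eB : ∀ (h : Bool) (x y : Fin (2 ^ n)),
      (cond h (bB n) (aB n)) x y = if q x = fL n (h.xor (g y)) (q y) then (1 : ℝ) else 0 := by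
    intro h x y
    rw [entryB]
    have : (x = fB n h y) = (q x = fL n (h.xor (g y)) (q y)) := by
      refine propext ⟨?_, ?_⟩
      · rintro rfl; exact hk h y
      · intro e; exact q.injective (e.trans (hk h y).symm)
    simp only [this]
  have a1 : aB n x y = if q x = fL n (g y) (q y) then (1 : ℝ) else 0 := by
    simpa using eB false x y
  have a2 : aB n y x = if q y = fL n (g x) (q x) then (1 : ℝ) else 0 := by
    simpa using eB false y x
  have b1 : bB n x y = if q x = fL n (!(g y)) (q y) then (1 : ℝ) else 0 := by
    simpa using eB true x y
  have b2 : bB n y x = if q y = fL n (!(g x)) (q x) then (1 : ℝ) else 0 := by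
    simpa using eB true y x
  have c1 : aL n (q x) (q y) = if q x = fL n false (q y) then (1 : ℝ) else 0 := by
    simpa using entryL n false (q x) (q y)
  have c2 : aL n (q y) (q x) = if q y = fL n false (q x) then (1 : ℝ) else 0 := by
    simpa using entryL n false (q y) (q x)
  have c3 : bL n (q x) (q y) = if q x = fL n true (q y) then (1 : ℝ) else 0 := by
    simpa using entryL n true (q x) (q y)
  have c4 : bL n (q y) (q x) = if q y = fL n true (q x) then (1 : ℝ) else 0 := by
    simpa using entryL n true (q y) (q x)
  simp only [MB, ML, Matrix.smul_apply, Matrix.add_apply, Matrix.transpose_apply, smul_eq_mul]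
  rw [a1, a2, b1, b2, c1, c2, c3, c4]
  cases hgy : g y <;> cases hgx : g x <;>
    simp only [hgy, hgx, Bool.not_false, Bool.not_true] <;> ring


/-- For every `n ≥ 1`, the real eigenvalues of the lamplighter transition
operator `M_L⁽ⁿ⁾` coincide with those of the BBS translation transition operator `M_B⁽ⁿ⁾`. -/
theorem lamplighter_bbs_spectra_coincide (n : ℕ) (hn : 1 ≤ n) :
    {x : ℝ | Matrix.det (ML n - x • (1 : Matrix (Fin (2 ^ n)) (Fin (2 ^ n)) ℝ)) = 0}
      = {x : ℝ | Matrix.det (MB n - x • (1 : Matrix (Fin (2 ^ n)) (Fin (2 ^ n)) ℝ)) = 0} := by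
  obtain ⟨q, hq⟩ := conj n
  have hM : MB n = (ML n).submatrix q q := by
    ext x y; simpa [Matrix.submatrix_apply] using hq x y
  have hdet : ∀ x : ℝ,
      Matrix.det (MB n - x • (1 : Matrix (Fin (2 ^ n)) (Fin (2 ^ n)) ℝ))
        = Matrix.det (ML n - x • (1 : Matrix (Fin (2 ^ n)) (Fin (2 ^ n)) ℝ)) := by
    intro x
    have hs : MB n - x • (1 : Matrix (Fin (2 ^ n)) (Fin (2 ^ n)) ℝ)
        = ((ML n - x • (1 : Matrix (Fin (2 ^ n)) (Fin (2 ^ n)) ℝ)).submatrix q q) := by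
      rw [hM]
      ext i j
      simp [Matrix.submatrix_apply, Matrix.sub_apply, Matrix.smul_apply, Matrix.one_apply,
        Equiv.apply_eq_iff_eq]
    rw [hs, Matrix.det_submatrix_equiv_self]
  ext x
  simp only [Set.mem_setOf_eq, hdet x]
end
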